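/- Let x ∈ GL(n, ℝ) have finite order, and suppose the eigenvalue 1 of x has a one-dimensional eigenspace realized as the first standard basis vector, so that x is block-diagonal: x = diag(1, J) where J ∈ GL(n-1, ℝ) does not have 1 as an eigenvalue. If x is conjugate in GL(n, ℝ) to x^k, then J is conjugate in GL(n-1, ℝ) to J^k. (Proof idea: any g with g·x = x^k·g must have zero in positions (2,1),…,(n,1), hence is block upper-triangular with invertible lower-right block.) -/
import Mathlib


open Matrix

private lemma fromBlocks_pow' {m : ℕ} (J : Matrix (Fin m) (Fin m) ℝ) (k : ℕ) :
    (Matrix.fromBlocks (1 : Matrix (Fin 1) (Fin 1) ℝ) 0 0 J) ^ k =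
      Matrix.fromBlocks 1 0 0 (J ^ k) := by
  induction k with
  | zero => simp [Matrix.fromBlocks_one]
  | succ n ih =>
      rw [pow_succ, pow_succ, ih, Matrix.fromBlocks_multiply]
      simp

/-- Let `x = diag(1, J)` be a block-diagonal real matrix of finite order, where
`J` is invertible and does not have `1` as an eigenvalue. If `x` is conjugate in
`GL(n, ℝ)` to `x ^ k`, then `J` is conjugate in `GL(n-1, ℝ)` to `J ^ k`. -/
theorem stmt13 {m : ℕ} (J : Matrix (Fin m) (Fin m) ℝ) (k : ℕ)
    (hJ : IsUnit J) (hJ1 : IsUnit (J - 1))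
    (x : Matrix (Fin 1 ⊕ Fin m) (Fin 1 ⊕ Fin m) ℝ)
    (hx : x = Matrix.fromBlocks (1 : Matrix (Fin 1) (Fin 1) ℝ) 0 0 J)
    (hord : ∃ p : ℕ, 0 < p ∧ x ^ p = 1)
    (hconj : ∃ g : (Matrix (Fin 1 ⊕ Fin m) (Fin 1 ⊕ Fin m) ℝ)ˣ,
      (g : Matrix (Fin 1 ⊕ Fin m) (Fin 1 ⊕ Fin m) ℝ) * x * ((g⁻¹ : _ˣ) :
        Matrix (Fin 1 ⊕ Fin m) (Fin 1 ⊕ Fin m) ℝ) = x ^ k) :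
    ∃ h : (Matrix (Fin m) (Fin m) ℝ)ˣ,
      (h : Matrix (Fin m) (Fin m) ℝ) * J * ((h⁻¹ : _ˣ) : Matrix (Fin m) (Fin m) ℝ) =
        J ^ k := by
  obtain ⟨g, hg⟩ := hconj
  -- turn conjugation into a commutation relation
  have hcomm : (g : Matrix (Fin 1 ⊕ Fin m) (Fin 1 ⊕ Fin m) ℝ) * x
      = x ^ k * (g : Matrix (Fin 1 ⊕ Fin m) (Fin 1 ⊕ Fin m) ℝ) := by
    have h1 : ((g⁻¹ : _ˣ) : Matrix (Fin 1 ⊕ Fin m) (Fin 1 ⊕ Fin m) ℝ) *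
        (g : Matrix (Fin 1 ⊕ Fin m) (Fin 1 ⊕ Fin m) ℝ) = 1 := by
      rw [← Units.val_mul, inv_mul_cancel, Units.val_one]
    have := congrArg (· * (g : Matrix (Fin 1 ⊕ Fin m) (Fin 1 ⊕ Fin m) ℝ)) hg
    simp only [mul_assoc, h1, Matrix.mul_one] at this
    exact this
  set G : Matrix (Fin 1 ⊕ Fin m) (Fin 1 ⊕ Fin m) ℝ := (g : Matrix (Fin 1 ⊕ Fin m) (Fin 1 ⊕ Fin m) ℝ) with hG
  set A := G.toBlocks₁₁
  set B := G.toBlocks₁₂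
  set C := G.toBlocks₂₁
  set D := G.toBlocks₂₂
  have hGb : G = Matrix.fromBlocks A B C D := (Matrix.fromBlocks_toBlocks G).symm
  have hxk : x ^ k = Matrix.fromBlocks 1 0 0 (J ^ k) := by
    rw [hx]; exact fromBlocks_pow' J k
  rw [hGb, hxk, hx, Matrix.fromBlocks_multiply, Matrix.fromBlocks_multiply] at hcomm
  simp only [Matrix.mul_zero, Matrix.zero_mul, add_zero, zero_add, Matrix.mul_one,
    Matrix.one_mul] at hcomm
  have hB : B * J = B := congrArg Matrix.toBlocks₁₂ hcomm
  have hD : D * J = J ^ k * D := congrArg Matrix.toBlocks₂₂ hcomm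
  -- B = 0
  have hB0 : B = 0 := by
    have : B * (J - 1) = 0 := by
      rw [Matrix.mul_sub, Matrix.mul_one, hB, sub_self]
    obtain ⟨u, hu⟩ := hJ1
    calc B = B * (J - 1) * (↑u⁻¹ : Matrix (Fin m) (Fin m) ℝ) := by
            rw [← hu, Matrix.mul_assoc, ← Units.val_mul, mul_inv_cancel, Units.val_one, Matrix.mul_one]
      _ = 0 := by rw [this, Matrix.zero_mul]
  -- D is invertible
  have hGdet : IsUnit G.det := by
    rw [hG]; exact (Matrix.isUnit_iff_isUnit_det _).mp g.isUnit
  have hDdet : IsUnit D.det := by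
    rw [hGb, hB0, Matrix.det_fromBlocks_zero₁₂] at hGdet
    exact isUnit_of_mul_isUnit_right hGdet
  have hDu : IsUnit D := (Matrix.isUnit_iff_isUnit_det _).mpr hDdet
  refine ⟨hDu.unit, ?_⟩
  have hcoe : (↑hDu.unit⁻¹ : Matrix (Fin m) (Fin m) ℝ) = D⁻¹ := by
    rw [Matrix.coe_units_inv, IsUnit.unit_spec]
  rw [hcoe, IsUnit.unit_spec, hD, mul_assoc, Matrix.mul_nonsing_inv _ hDdet, Matrix.mul_one]
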